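/- arXiv:1909.06697 — 2 statements merged into one kernel-verified Lean document; each statement's English description precedes it below -/
import Mathlib

section
/- For every state x = (x_1,…,x_k) ∈ S with x_1+⋯+x_k ≤ m−1 and every index j ∈ {1,…,k}, the mass function p satisfies the detailed balance equation p(x) · λ_j · θ(x_1+⋯+x_k) = p(x+e_j) · (x_j+1) · μ_j, where e_j denotes the vector with a 1 in coordinate j and zeros elsewhere (so the product-form mass function p makes the non-persistent-user Markov chain reversible). -/
/-- the product-form mass function satisfies the detailed balance equations
for the non-persistent-user Markov chain. -/
theorem detailed_balance_nonpersistent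
    (m k : ℕ) (hm : 0 < m) (hk : 0 < k)
    (θ : ℕ → ℝ)
    (hθ1 : ∀ b ≤ m, 0 ≤ θ b ∧ θ b ≤ 1)
    (hθ2 : ∀ b < m, 0 < θ b)
    (hθ3 : θ m = 0)
    (lam μ : Fin k → ℝ)
    (hlam : ∀ i, 0 < lam i) (hμ : ∀ i, 0 < μ i)
    (ρ : Fin k → ℝ) (hρ : ∀ i, ρ i = lam i / μ i)
    (A : ℝ) (hA : 0 < A)
    (p : (Fin k → ℕ) → ℝ)
    (hp : ∀ x : Fin k → ℕ,
      p x = A * (∏ r ∈ Finset.range (∑ i, x i), θ r) *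
        ∏ i, ρ i ^ (x i) / (x i).factorial)
    (x : Fin k → ℕ) (hx : ∑ i, x i + 1 ≤ m) (j : Fin k) :
    p x * lam j * θ (∑ i, x i) =
      p (Function.update x j (x j + 1)) * ((x j : ℝ) + 1) * μ j := by
  have hsum : ∑ i, Function.update x j (x j + 1) i = ∑ i, x i + 1 := by
    rw [Finset.sum_update_of_mem (Finset.mem_univ j)]
    rw [← Finset.add_sum_erase _ x (Finset.mem_univ j)]
    rw [Finset.sdiff_singleton_eq_erase]
    ring
  have hprod : ∀ y : Fin k → ℕ,
      (∏ i, ρ i ^ (y i) / (y i).factorial : ℝ)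
        = (ρ j ^ (y j) / (y j).factorial) *
          ∏ i ∈ Finset.univ.erase j, ρ i ^ (y i) / (y i).factorial := by
    intro y
    rw [← Finset.mul_prod_erase _ _ (Finset.mem_univ j)]
  rw [hp, hp, hsum, hprod, hprod]
  have herase : ∏ i ∈ Finset.univ.erase j,
      (ρ i ^ (Function.update x j (x j + 1) i) / (Function.update x j (x j + 1) i).factorial : ℝ)
      = ∏ i ∈ Finset.univ.erase j, ρ i ^ (x i) / (x i).factorial := by
    apply Finset.prod_congr rfl
    intro i hi
    rw [Function.update_of_ne (Finset.ne_of_mem_erase hi)]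
  rw [herase, Function.update_self, Finset.prod_range_succ]
  have hfac : ((x j + 1).factorial : ℝ) = ((x j : ℝ) + 1) * (x j).factorial := by
    rw [Nat.factorial_succ]; push_cast; ring
  have hρj : ρ j * μ j = lam j := by
    rw [hρ, div_mul_cancel₀ _ (hμ j).ne']
  have h1 : ((x j).factorial : ℝ) ≠ 0 := Nat.cast_ne_zero.mpr (Nat.factorial_ne_zero _)
  have h2 : (x j : ℝ) + 1 ≠ 0 := by positivity
  rw [pow_succ, hfac, ← hρj]
  field_simp
end

section
/- The long-term success probability φ := ∑_{x∈S} θ(x_1+⋯+x_k) · p(x) satisfies φ = A · ∑_{b=0}^m (∏_{r=0}^{b} θ(r)) · ρ^b/b!. In particular φ depends on the parameters λ_1,…,λ_k, μ_1,…,μ_k only through the single loading parameter ρ = ∑_{i=1}^k λ_i/μ_i. -/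
lemma antidiag_sum_prod_div_factorial (k b : ℕ) (ρ : Fin k → ℝ) :
    ∑ x ∈ Finset.Nat.antidiagonalTuple k b,
      ∏ i, ρ i ^ (x i) / (x i).factorial = (∑ i, ρ i) ^ b / b.factorial := by
  rw [Finset.sum_pow_eq_sum_piAntidiag, Finset.piAntidiag_univ_fin_eq_antidiagonalTuple,
    Finset.sum_div]
  refine Finset.sum_congr rfl fun x hx => ?_
  rw [Finset.Nat.mem_antidiagonalTuple] at hx
  have hspec := Nat.multinomial_spec Finset.univ x
  rw [hx] at hspec
  have hfacne : (∏ i, ((x i).factorial : ℝ)) ≠ 0 := by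
    positivity
  have : ((Nat.multinomial Finset.univ x : ℝ)) = (b.factorial : ℝ) / ∏ i, ((x i).factorial : ℝ) := by
    field_simp
    rw [mul_comm]
    exact_mod_cast congrArg Nat.cast hspec
  rw [this, Finset.prod_div_distrib]
  have hb : (b.factorial : ℝ) ≠ 0 := by positivity
  field_simp

/-- the long-term success probability
`φ = ∑_{x∈S} θ(x₁+⋯+x_k) p(x)` equals `A ∑_{b=0}^m (∏_{r=0}^{b} θ(r)) ρ^b/b!`,
hence depends on the rates only through `ρ = ∑ᵢ λᵢ/μᵢ`. -/
theorem long_term_success_probability_nonpersistent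
    (m k : ℕ) (hm : 0 < m) (hk : 0 < k)
    (θ : ℕ → ℝ)
    (hθ1 : ∀ b ≤ m, 0 ≤ θ b ∧ θ b ≤ 1)
    (hθ2 : ∀ b < m, 0 < θ b)
    (hθ3 : θ m = 0)
    (lam μ : Fin k → ℝ)
    (hlam : ∀ i, 0 < lam i) (hμ : ∀ i, 0 < μ i)
    (ρ : Fin k → ℝ) (hρ : ∀ i, ρ i = lam i / μ i)
    (A : ℝ) (hA : 0 < A)
    (p : (Fin k → ℕ) → ℝ)
    (hp : ∀ x : Fin k → ℕ,
      p x = A * (∏ r ∈ Finset.range (∑ i, x i), θ r) *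
        ∏ i, ρ i ^ (x i) / (x i).factorial)
    (hsum : ∑ b ∈ Finset.range (m + 1),
      ∑ x ∈ Finset.Nat.antidiagonalTuple k b, p x = 1)
    (φ : ℝ)
    (hφ : φ = ∑ b ∈ Finset.range (m + 1),
      ∑ x ∈ Finset.Nat.antidiagonalTuple k b, θ (∑ i, x i) * p x) :
    φ = A * ∑ b ∈ Finset.range (m + 1),
      (∏ r ∈ Finset.range (b + 1), θ r) * (∑ i, ρ i) ^ b / b.factorial := by
  rw [hφ, Finset.mul_sum]
  refine Finset.sum_congr rfl fun b _ => ?_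
  have : ∀ x ∈ Finset.Nat.antidiagonalTuple k b,
      θ (∑ i, x i) * p x =
        (A * ∏ r ∈ Finset.range (b + 1), θ r) * ∏ i, ρ i ^ (x i) / (x i).factorial := by
    intro x hx
    rw [Finset.Nat.mem_antidiagonalTuple] at hx
    rw [hp x, hx, Finset.prod_range_succ]
    ring
  rw [Finset.sum_congr rfl this, ← Finset.mul_sum, antidiag_sum_prod_div_factorial]
  ring
end
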